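/- arXiv:2107.04877 — 3 statements merged into one kernel-verified Lean document; each statement's English description precedes it below -/
import Mathlib

section
/- If two vertices u and v of a connected graph G are mutually maximally distant, then every strong resolving set of G contains u or v. -/
open SimpleGraph Finset

variable {V : Type*}

/-- A vertex `x` resolves the pair `u, v` if it is at different distances from them. -/
def IsResolvingSet (G : SimpleGraph V) (S : Set V) : Prop :=
  ∀ u v : V, u ≠ v → ∃ x ∈ S, G.dist u x ≠ G.dist v x

/-- The metric dimension: minimum cardinality of a resolving set. -/
noncomputable def metricDim (G : SimpleGraph V) [Fintype V] : ℕ :=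
  sInf {n | ∃ S : Finset V, S.card = n ∧ IsResolvingSet G ↑S}

/-- `w` strongly resolves `u, v`. -/
def StronglyResolves (G : SimpleGraph V) (w u v : V) : Prop :=
  G.dist w u = G.dist w v + G.dist v u ∨ G.dist w v = G.dist w u + G.dist u v

def IsStrongResolvingSet (G : SimpleGraph V) (S : Set V) : Prop :=
  ∀ u v : V, u ≠ v → ∃ w ∈ S, StronglyResolves G w u v

noncomputable def strongMetricDim (G : SimpleGraph V) [Fintype V] : ℕ :=
  sInf {n | ∃ S : Finset V, S.card = n ∧ IsStrongResolvingSet G ↑S}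

/-- `u` is maximally distant from `v`. -/
def MaxDistant (G : SimpleGraph V) (u v : V) : Prop :=
  ∀ w : V, G.Adj u w → G.dist v w ≤ G.dist v u

def MutuallyMaxDistant (G : SimpleGraph V) (u v : V) : Prop :=
  MaxDistant G u v ∧ MaxDistant G v u

/-- The strong resolving graph of `G`. -/
def strongResolvingGraph (G : SimpleGraph V) : SimpleGraph V where
  Adj u v := u ≠ v ∧ MutuallyMaxDistant G u v
  symm := by
    refine ⟨fun u v h => ?_⟩
    exact ⟨h.1.symm, h.2.2, h.2.1⟩
  loopless := by
    refine ⟨fun u h => ?_⟩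
    exact h.1 rfl

def IsVertexCover (H : SimpleGraph V) (S : Set V) : Prop :=
  ∀ u v : V, H.Adj u v → u ∈ S ∨ v ∈ S

noncomputable def vertexCoverNum (H : SimpleGraph V) [Fintype V] : ℕ :=
  sInf {n | ∃ S : Finset V, S.card = n ∧ _root_.IsVertexCover H ↑S}

def IsLocalResolvingSet (G : SimpleGraph V) (S : Set V) : Prop :=
  ∀ u v : V, G.Adj u v → ∃ x ∈ S, G.dist u x ≠ G.dist v x

noncomputable def localMetricDim (G : SimpleGraph V) [Fintype V] : ℕ :=
  sInf {n | ∃ S : Finset V, S.card = n ∧ IsLocalResolvingSet G ↑S}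

def IsIndepVertexSet (G : SimpleGraph V) (S : Set V) : Prop :=
  S.Pairwise fun u v => ¬ G.Adj u v

noncomputable def indepNum (G : SimpleGraph V) [Fintype V] : ℕ :=
  sSup {n | ∃ S : Finset V, S.card = n ∧ IsIndepVertexSet G ↑S}

def IsAdjResolvingSet (G : SimpleGraph V) (S : Set V) : Prop :=
  ∀ x y : V, x ≠ y → x ∉ S → y ∉ S →
    ∃ s ∈ S, (G.Adj s x ∧ ¬ G.Adj s y) ∨ (¬ G.Adj s x ∧ G.Adj s y)

noncomputable def adjDim (G : SimpleGraph V) [Fintype V] : ℕ :=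
  sInf {n | ∃ S : Finset V, S.card = n ∧ IsAdjResolvingSet G ↑S}

def IsKResolvingSet (G : SimpleGraph V) (k : ℕ) (S : Finset V) : Prop :=
  ∀ x y : V, x ≠ y → k ≤ (S.filter fun w => G.dist x w ≠ G.dist y w).card

noncomputable def kMetricDim (G : SimpleGraph V) [Fintype V] (k : ℕ) : ℕ :=
  sInf {n | ∃ S : Finset V, S.card = n ∧ IsKResolvingSet G k S}

def IsKMetricDimensional (G : SimpleGraph V) (k : ℕ) : Prop :=
  (∃ S : Finset V, IsKResolvingSet G k S) ∧
    ∀ j : ℕ, (∃ S : Finset V, IsKResolvingSet G j S) → j ≤ k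

/-- distance from a vertex to a finite set of vertices -/
noncomputable def fsetDist (G : SimpleGraph V) (v : V) (P : Finset V) : ℕ :=
  sInf {d | ∃ w ∈ P, G.dist v w = d}

def IsResolvingPartition [Fintype V] [DecidableEq V] (G : SimpleGraph V)
    (Pt : Finpartition (Finset.univ : Finset V)) : Prop :=
  ∀ u v : V, u ≠ v → ∃ P ∈ Pt.parts, fsetDist G u P ≠ fsetDist G v P

noncomputable def partitionDim (G : SimpleGraph V) [Fintype V] [DecidableEq V] : ℕ :=
  sInf {n | ∃ Pt : Finpartition (Finset.univ : Finset V), Pt.parts.card = n ∧ IsResolvingPartition G Pt}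

def SetStronglyResolves (G : SimpleGraph V) (W : Finset V) (x y : V) : Prop :=
  x ∉ W ∧ y ∉ W ∧
    (fsetDist G x W = G.dist x y + fsetDist G y W ∨
      fsetDist G y W = G.dist y x + fsetDist G x W)

def IsStrongResolvingPartition [Fintype V] [DecidableEq V] (G : SimpleGraph V)
    (Pt : Finpartition (Finset.univ : Finset V)) : Prop :=
  ∀ Q ∈ Pt.parts, ∀ x ∈ Q, ∀ y ∈ Q, x ≠ y →
    ∃ P ∈ Pt.parts, SetStronglyResolves G P x y

noncomputable def strongPartitionDim (G : SimpleGraph V) [Fintype V] [DecidableEq V] : ℕ :=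
  sInf {n | ∃ Pt : Finpartition (Finset.univ : Finset V),
    Pt.parts.card = n ∧ IsStrongResolvingPartition G Pt}

/-- distance from an edge (as an unordered pair) to a vertex -/
noncomputable def edgeDist (G : SimpleGraph V) (e : Sym2 V) (v : V) : ℕ :=
  Sym2.lift ⟨fun a b => min (G.dist a v) (G.dist b v), fun a b => min_comm _ _⟩ e

def IsEdgeResolvingSet (G : SimpleGraph V) (S : Set V) : Prop :=
  ∀ e ∈ G.edgeSet, ∀ f ∈ G.edgeSet, e ≠ f → ∃ x ∈ S, edgeDist G e x ≠ edgeDist G f x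

noncomputable def edgeMetricDim (G : SimpleGraph V) [Fintype V] : ℕ :=
  sInf {n | ∃ S : Finset V, S.card = n ∧ IsEdgeResolvingSet G ↑S}

noncomputable def Rset (G : SimpleGraph V) [Fintype V] (x y : V) : Finset V :=
  Finset.univ.filter fun w => G.dist x w ≠ G.dist y w

def IsResolvingFunction (G : SimpleGraph V) [Fintype V] (f : V → ℝ) : Prop :=
  (∀ v : V, 0 ≤ f v ∧ f v ≤ 1) ∧
    ∀ x y : V, x ≠ y → 1 ≤ ∑ w ∈ Rset G x y, f w

noncomputable def fracMetricDim (G : SimpleGraph V) [Fintype V] : ℝ :=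
  sInf {t : ℝ | ∃ f : V → ℝ, IsResolvingFunction G f ∧ t = ∑ v, f v}

def AreTwins (G : SimpleGraph V) (u v : V) : Prop :=
  u ≠ v ∧ (G.neighborSet u = G.neighborSet v ∨
    insert u (G.neighborSet u) = insert v (G.neighborSet v))

noncomputable def graphDiam (G : SimpleGraph V) : ℕ :=
  sSup (Set.range fun p : V × V => G.dist p.1 p.2)



/-
If `w` strongly resolves `u, v` through `v`, i.e. `v` lies on a geodesic from `w` to `u`, and
`w ≠ v`, then stepping from `v` one edge towards `w` gives a vertex `v'` with
`d(w, v') + d(v', u) < d(w, v) + d(v, u) = d(w, u)` as soon as `d(u, v') ≤ d(u, v)`; this is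
exactly what `v` being maximally distant from `u` forbids. So a mutually maximally distant pair
can only be strongly resolved by one of its own vertices.
-/

variable {G : SimpleGraph V} {u v w : V}

namespace SimpleGraph

theorem Reachable.exists_adj_dist_lt (h : G.Reachable v w) (hne : v ≠ w) :
    ∃ v', G.Adj v v' ∧ G.dist v' w < G.dist v w := by
  obtain ⟨p, hp⟩ := h.exists_walk_length_eq_dist
  cases p with
  | nil => exact absurd rfl hne
  | cons hadj q =>
    refine ⟨_, hadj, ?_⟩
    have := dist_le q
    rw [Walk.length_cons] at hp
    omega

end SimpleGraph

theorem MaxDistant.eq_of_dist_eq_add (hv : MaxDistant G v u) (hwv : G.Reachable w v)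
    (h : G.dist w u = G.dist w v + G.dist v u) : w = v := by
  by_contra hne
  obtain ⟨v', hadj, hcloser⟩ := hwv.symm.exists_adj_dist_lt (Ne.symm hne)
  have hfar : G.dist v' u ≤ G.dist v u := by
    rw [dist_comm, dist_comm (u := v)]
    exact hv v' hadj
  replace hcloser : G.dist w v' < G.dist w v := by
    rw [dist_comm, dist_comm (u := w)]
    exact hcloser
  refine lt_irrefl (G.dist w u) ?_
  calc
    G.dist w u ≤ G.dist w v' + G.dist v' u := (hwv.trans hadj.reachable).dist_triangle_left u
    _ < G.dist w v + G.dist v u := by omega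
    _ = G.dist w u := h.symm

theorem StronglyResolves.eq_or_eq_of_mutuallyMaxDistant (hG : G.Connected)
    (huv : MutuallyMaxDistant G u v) (h : StronglyResolves G w u v) : w = u ∨ w = v := by
  rcases h with h | h
  · exact Or.inr (huv.2.eq_of_dist_eq_add (hG w v) h)
  · exact Or.inl (huv.1.eq_of_dist_eq_add (hG w u) h)

theorem stmt1_general (G : SimpleGraph V) (hG : G.Connected) (u v : V) (huv : u ≠ v)
    (hmmd : MutuallyMaxDistant G u v) (S : Set V) (hS : IsStrongResolvingSet G S) :
    u ∈ S ∨ v ∈ S := by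
  obtain ⟨w, hwS, hres⟩ := hS u v huv
  rcases hres.eq_or_eq_of_mutuallyMaxDistant hG hmmd with rfl | rfl
  · exact Or.inl hwS
  · exact Or.inr hwS

theorem stmt1 [Fintype V] (G : SimpleGraph V) (hG : G.Connected) (u v : V) (huv : u ≠ v)
    (hmmd : MutuallyMaxDistant G u v) (S : Set V) (hS : IsStrongResolvingSet G S) :
    u ∈ S ∨ v ∈ S :=
  stmt1_general G hG u v huv hmmd S hS
end

section
/- A nontrivial connected graph G has local metric dimension 1 if and only if G is bipartite. -/
open SimpleGraph Finset

variable {V : Type*}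

/-!
Distances to a fixed vertex `x` change by at most one along an edge. So `{x}` resolves every edge
exactly when `v ↦ dist v x mod 2` is a proper colouring; conversely, if some edge `uv` had
`dist u x = dist v x = d`, then the edge together with two shortest paths to `x` would be a closed
walk of odd length `2d + 1`, which a bipartite graph does not have.
-/

namespace SimpleGraph

variable {G : SimpleGraph V}

lemma not_isLocalResolvingSet_empty {u v : V} (huv : G.Adj u v) : ¬IsLocalResolvingSet G ∅ :=
  fun h => by simpa using h u v huv

lemma colorable_two_of_isLocalResolvingSet_singleton {x : V}
    (hx : IsLocalResolvingSet G {x}) : G.Colorable 2 := by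
  let c : G.Coloring Bool := Coloring.mk (fun v => decide (Even (G.dist x v))) fun {u v} huv => by
    obtain ⟨y, hy, hne⟩ := hx u v huv
    rw [Set.mem_singleton_iff.mp hy, dist_comm, dist_comm (u := v)] at hne
    rcases huv.diff_dist_adj (u := x) with h | h | h <;> grind
  simpa using c.colorable

lemma Connected.dist_ne_of_adj_of_colorable_two (hG : G.Connected) (h2 : G.Colorable 2)
    {u v : V} (huv : G.Adj u v) (x : V) : G.dist u x ≠ G.dist v x := by
  intro hd
  obtain ⟨p, hp⟩ := hG.exists_walk_length_eq_dist u x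
  obtain ⟨q, hq⟩ := hG.exists_walk_length_eq_dist v x
  have heven := two_colorable_iff_forall_loop_even.mp h2 u ((q.cons huv).append p.reverse)
  rw [Walk.length_append, Walk.length_cons, Walk.length_reverse, hp, hq, hd] at heven
  grind

lemma Connected.isLocalResolvingSet_singleton_of_colorable_two (hG : G.Connected)
    (h2 : G.Colorable 2) (x : V) : IsLocalResolvingSet G {x} :=
  fun _ _ huv => ⟨x, rfl, hG.dist_ne_of_adj_of_colorable_two h2 huv x⟩

lemma localMetricDim_eq_one_iff [Fintype V] {u v : V} (huv : G.Adj u v) :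
    localMetricDim G = 1 ↔ ∃ x, IsLocalResolvingSet G {x} := by
  classical
  set S := {n | ∃ T : Finset V, T.card = n ∧ IsLocalResolvingSet G ↑T}
  have h0 : 0 ∉ S := by
    rintro ⟨T, hT, hres⟩
    rw [card_eq_zero.mp hT, coe_empty] at hres
    exact not_isLocalResolvingSet_empty huv hres
  constructor
  · intro h1
    obtain ⟨T, hT, hres⟩ : 1 ∈ S := h1 ▸ Nat.sInf_mem (Nat.nonempty_of_sInf_eq_succ h1)
    obtain ⟨x, rfl⟩ := card_eq_one.mp hT
    exact ⟨x, by simpa using hres⟩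
  · rintro ⟨x, hx⟩
    have h1 : 1 ∈ S := ⟨{x}, card_singleton x, by simpa using hx⟩
    refine le_antisymm (Nat.sInf_le h1) (Nat.one_le_iff_ne_zero.mpr fun h => ?_)
    rcases Nat.sInf_eq_zero.mp h with h | h
    · exact h0 h
    · exact Set.nonempty_iff_ne_empty.mp ⟨1, h1⟩ h

end SimpleGraph

theorem stmt3 [Fintype V] (G : SimpleGraph V) (hG : G.Connected)
    (hn : 2 ≤ Fintype.card V) :
    localMetricDim G = 1 ↔ G.Colorable 2 := by
  have : Nontrivial V := Fintype.one_lt_card_iff_nontrivial.mp hn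
  obtain ⟨x, y, hxy⟩ : ∃ x y, G.Adj x y :=
    ⟨_, hG.preconnected.exists_adj_of_nontrivial hG.nonempty.some⟩
  rw [localMetricDim_eq_one_iff hxy]
  exact ⟨fun ⟨_, hres⟩ => colorable_two_of_isLocalResolvingSet_singleton hres,
    fun h2 => ⟨x, hG.isLocalResolvingSet_singleton_of_colorable_two h2 x⟩⟩
end

section
/- Let G be a k-metric dimensional connected graph and 1 ≤ k₁ < k₂ ≤ k. Then the k₁-metric dimension of G is strictly less than the k₂-metric dimension of G. -/
open SimpleGraph Finset

variable {V : Type*}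

namespace IsKResolvingSet

variable {G : SimpleGraph V} {k : ℕ} {S : Finset V}

theorem anti {j : ℕ} (hS : IsKResolvingSet G k S) (hjk : j ≤ k) : IsKResolvingSet G j S :=
  fun x y hxy => hjk.trans (hS x y hxy)

theorem le_card (hS : IsKResolvingSet G k S) {x y : V} (hxy : x ≠ y) : k ≤ S.card :=
  (hS x y hxy).trans (card_filter_le _ _)

theorem erase [DecidableEq V] (hS : IsKResolvingSet G (k + 1) S) (w : V) :
    IsKResolvingSet G k (S.erase w) := by
  intro x y hxy
  rw [filter_erase]
  have := pred_card_le_card_erase (s := S.filter fun z => G.dist x z ≠ G.dist y z) (a := w)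
  have := hS x y hxy
  omega

end IsKResolvingSet

theorem IsKMetricDimensional.nontrivial {G : SimpleGraph V} {k : ℕ}
    (hk : IsKMetricDimensional G k) : Nontrivial V := by
  by_contra hV
  rw [not_nontrivial_iff_subsingleton] at hV
  have hres : IsKResolvingSet G (k + 1) ∅ := fun x y hxy => absurd (Subsingleton.elim x y) hxy
  exact Nat.not_succ_le_self k (hk.2 (k + 1) ⟨∅, hres⟩)

section kMetricDim

variable [Fintype V] {G : SimpleGraph V} {k : ℕ}

theorem kMetricDim_le_card {S : Finset V} (hS : IsKResolvingSet G k S) :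
    kMetricDim G k ≤ S.card :=
  Nat.sInf_le ⟨S, rfl, hS⟩

theorem exists_card_eq_kMetricDim (h : ∃ S : Finset V, IsKResolvingSet G k S) :
    ∃ S : Finset V, S.card = kMetricDim G k ∧ IsKResolvingSet G k S :=
  let ⟨S, hS⟩ := h
  Nat.sInf_mem (s := {n | ∃ S : Finset V, S.card = n ∧ IsKResolvingSet G k S})
    ⟨S.card, S, rfl, hS⟩

/-- Deleting one vertex from a minimum `k₂`-resolving set leaves a `k₁`-resolving set. -/
theorem kMetricDim_lt_kMetricDim [Nontrivial V] {k₁ k₂ : ℕ}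
    (h : ∃ S : Finset V, IsKResolvingSet G k₂ S) (h12 : k₁ < k₂) :
    kMetricDim G k₁ < kMetricDim G k₂ := by
  classical
  obtain ⟨S, hcard, hS⟩ := exists_card_eq_kMetricDim h
  obtain ⟨x, y, hxy⟩ := exists_pair_ne V
  obtain ⟨w, hw⟩ : S.Nonempty := card_pos.mp (by have := hS.le_card hxy; omega)
  calc kMetricDim G k₁ ≤ (S.erase w).card := kMetricDim_le_card ((hS.anti h12).erase w)
    _ < S.card := card_erase_lt_of_mem hw
    _ = kMetricDim G k₂ := hcard

end kMetricDim

theorem stmt11_general [Fintype V] (G : SimpleGraph V) (k k₁ k₂ : ℕ)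
    (hk : IsKMetricDimensional G k) (h12 : k₁ < k₂) (h2 : k₂ ≤ k) :
    kMetricDim G k₁ < kMetricDim G k₂ := by
  have := hk.nontrivial
  exact kMetricDim_lt_kMetricDim (hk.1.imp fun _ hS => hS.anti h2) h12

theorem stmt11 [Fintype V] (G : SimpleGraph V) (hG : G.Connected) (k k₁ k₂ : ℕ)
    (hk : IsKMetricDimensional G k) (h1 : 1 ≤ k₁) (h12 : k₁ < k₂) (h2 : k₂ ≤ k) :
    kMetricDim G k₁ < kMetricDim G k₂ :=
  stmt11_general G k k₁ k₂ hk h12 h2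
end
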